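/- arXiv:1206.3359 — 3 statements merged into one kernel-verified Lean document; each statement's English description precedes it below -/
import Mathlib

section
/- Let N be an n×m real matrix whose columns indexed by a subset J ⊆ {1,…,m} are linearly independent, and let D = diag(D₁,…,D_m) be a diagonal matrix with D_i ≥ 0 for all i and D_i > 0 for every i ∉ J. Then the matrix NᵀN + D is symmetric positive definite (and hence nonsingular). -/
/-!
The quadratic form `xᵀ (Nᵀ N + D) x = ‖N x‖² + ∑ Dᵢ xᵢ²` is a sum of two nonnegative terms. If it
vanishes then `N x = 0` and `D x = 0`; the latter forces `xᵢ = 0` off `J`, so `N x = 0` is a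
vanishing combination of the independent columns indexed by `J`, whence `x = 0`.
-/

open Matrix

namespace Matrix

open scoped ComplexOrder

variable {ι κ : Type*} [Fintype κ]

theorem eq_zero_of_mulVec_eq_zero_of_linearIndepOn {R : Type*} [CommRing R]
    {N : Matrix ι κ R} {J : Set κ} (hJ : LinearIndepOn R Nᵀ J) {x : κ → R}
    (hxJ : ∀ i ∉ J, x i = 0) (hNx : N *ᵥ x = 0) : x = 0 := by
  classical
  have hsum : ∑ i ∈ J.toFinset, x i • Nᵀ i = 0 := by
    rw [Finset.sum_subset (Finset.subset_univ _) fun i _ hi => by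
      rw [hxJ i (by simpa using hi), zero_smul]]
    simpa [mulVec_eq_sum] using hNx
  funext i
  by_cases hi : i ∈ J
  · exact linearIndepOn_iff'.mp hJ J.toFinset x (by simp) hsum i (by simpa using hi)
  · exact hxJ i hi

theorem PosSemidef.posDef_add_of_forall_mulVec_eq_zero {𝕜 : Type*} [RCLike 𝕜]
    {A B : Matrix κ κ 𝕜} (hA : A.PosSemidef) (hB : B.PosSemidef)
    (hAB : ∀ x, A *ᵥ x = 0 → B *ᵥ x = 0 → x = 0) : (A + B).PosDef := by
  refine posDef_iff_dotProduct_mulVec.mpr ⟨(hA.add hB).isHermitian, fun x hx => ?_⟩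
  have hAx := (posSemidef_iff_dotProduct_mulVec.mp hA).2 x
  have hBx := (posSemidef_iff_dotProduct_mulVec.mp hB).2 x
  rw [add_mulVec, dotProduct_add]
  refine (add_nonneg hAx hBx).lt_of_ne fun h => hx ?_
  obtain ⟨hA0, hB0⟩ := (add_eq_zero_iff_of_nonneg hAx hBx).mp h.symm
  exact hAB x ((hA.dotProduct_mulVec_zero_iff x).mp hA0) ((hB.dotProduct_mulVec_zero_iff x).mp hB0)

end Matrix

/-- If the columns of `N` indexed by `J` are linearly independent and `D` is a
diagonal matrix with nonnegative entries that are strictly positive off `J`, then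
`Nᵀ N + D` is (symmetric) positive definite, hence nonsingular. -/
theorem stmt_0 (n m : ℕ) (N : Matrix (Fin n) (Fin m) ℝ) (J : Set (Fin m))
    (hJ : LinearIndependent ℝ (fun i : J => (fun r => N r i.1 : Fin n → ℝ)))
    (D : Fin m → ℝ) (hD0 : ∀ i, 0 ≤ D i) (hDpos : ∀ i ∉ J, 0 < D i) :
    (Nᵀ * N + Matrix.diagonal D).PosDef ∧ IsUnit (Nᵀ * N + Matrix.diagonal D).det := by
  have hpd : (Nᵀ * N + diagonal D).PosDef := by
    refine (posSemidef_conjTranspose_mul_self N).posDef_add_of_forall_mulVec_eq_zero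
      (posSemidef_diagonal_iff.mpr hD0) fun x hNx hDx => ?_
    refine eq_zero_of_mulVec_eq_zero_of_linearIndepOn hJ (fun i hi => ?_)
      ((conjTranspose_mul_self_mulVec_eq_zero N x).mp hNx)
    have hDxi : D i * x i = 0 := by simpa [mulVec_diagonal] using congrFun hDx i
    exact (mul_eq_zero.mp hDxi).resolve_left (hDpos i hi).ne'
  exact ⟨hpd, (isUnit_iff_isUnit_det _).mp hpd.isUnit⟩
end

section
/- Let H ∈ ℝ^{n×n} be symmetric positive definite, N ∈ ℝ^{n×m}, and Q = diag(Q₁,…,Q_m) with Qᵢ ≥ 0 for all i. Suppose that the columns of N indexed by J = {i : Qᵢ = 0} are linearly independent. Then the block matrix Γ = [[H, N],[Nᵀ, -Q]] is nonsingular. -/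
/-!
If `Γ (x, y) = 0`, i.e. `H x + N y = 0` and `Nᵀ x = Q y`, then pairing the first equation with
`x` and the second with `y` gives `xᵀ H x + yᵀ Q y = 0`. Both terms are nonnegative, so `x = 0`
by definiteness of `H` and `Q y = 0`; hence `y` is supported on `J` and `N y = -H x = 0`, which
forces `y = 0` by the linear independence of the columns of `N` indexed by `J`.
-/

open Matrix

namespace Matrix

variable {ι κ : Type*} [Fintype κ]

theorem eq_zero_of_fromBlocks_mulVec_eq_zero [Fintype ι] {H : Matrix ι ι ℝ} {N : Matrix ι κ ℝ}
    {D : Matrix κ κ ℝ} (hH : H.PosDef) (hD : D.PosSemidef) {x : ι → ℝ} {y : κ → ℝ}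
    (hxy : fromBlocks H N Nᵀ (-D) *ᵥ Sum.elim x y = 0) :
    x = 0 ∧ N *ᵥ y = 0 ∧ D *ᵥ y = 0 := by
  rw [fromBlocks_mulVec, Sum.elim_comp_inl, Sum.elim_comp_inr, ← Sum.elim_zero_zero,
    Sum.elim_eq_iff] at hxy
  obtain ⟨hx, hy⟩ := hxy
  have hquad : x ⬝ᵥ H *ᵥ x + y ⬝ᵥ D *ᵥ y = 0 := by
    have hNxy : y ⬝ᵥ Nᵀ *ᵥ x = x ⬝ᵥ N *ᵥ y := by
      rw [dotProduct_mulVec, vecMul_transpose, dotProduct_comm]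
    have h₁ := congrArg (x ⬝ᵥ ·) hx
    have h₂ := congrArg (y ⬝ᵥ ·) hy
    simp only [dotProduct_add, dotProduct_zero, neg_mulVec, dotProduct_neg] at h₁ h₂
    linarith
  have hHx := hH.posSemidef.dotProduct_mulVec_nonneg x
  have hDy := hD.dotProduct_mulVec_nonneg y
  simp only [star_trivial] at hHx hDy
  have hx0 : x = 0 := by
    by_contra hx0
    have hpos := hH.dotProduct_mulVec_pos hx0
    simp only [star_trivial] at hpos
    linarith
  have hDy0 : D *ᵥ y = 0 :=
    (hD.dotProduct_mulVec_zero_iff y).1 (by rw [star_trivial]; linarith)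
  refine ⟨hx0, ?_, hDy0⟩
  simpa [hx0] using hx

theorem det_fromBlocks_ne_zero_of_posDef [Fintype ι] [DecidableEq ι] [DecidableEq κ]
    {H : Matrix ι ι ℝ} {N : Matrix ι κ ℝ} {D : Matrix κ κ ℝ} (hH : H.PosDef) (hD : D.PosSemidef)
    (hker : ∀ y, N *ᵥ y = 0 → D *ᵥ y = 0 → y = 0) :
    (fromBlocks H N Nᵀ (-D)).det ≠ 0 := by
  intro hdet
  obtain ⟨v, hv, hΓv⟩ := exists_mulVec_eq_zero_iff.2 hdet
  rw [← Sum.elim_comp_inl_inr v] at hv hΓv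
  obtain ⟨hx, hNy, hDy⟩ := eq_zero_of_fromBlocks_mulVec_eq_zero hH hD hΓv
  exact hv (by rw [hx, hker _ hNy hDy, Sum.elim_zero_zero])

theorem diagonal_mulVec_eq_zero_iff {R : Type*} [Semiring R] [NoZeroDivisors R] [DecidableEq κ]
    {d y : κ → R} : diagonal d *ᵥ y = 0 ↔ ∀ i, d i ≠ 0 → y i = 0 := by
  simp only [funext_iff, mulVec_diagonal, Pi.zero_apply, mul_eq_zero]
  grind

theorem eq_zero_of_mulVec_eq_zero_of_linearIndependent {R : Type*} [CommRing R]
    {N : Matrix ι κ R} {p : κ → Prop} [DecidablePred p]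
    (hind : LinearIndependent R fun i : {i // p i} => Nᵀ i.1)
    {y : κ → R} (hsupp : ∀ i, ¬p i → y i = 0) (hNy : N *ᵥ y = 0) : y = 0 := by
  have hsum : ∑ i : {i // p i}, y i • Nᵀ i = 0 := by
    have hrest : ∑ i : {i // ¬p i}, y i • Nᵀ i = 0 :=
      Finset.sum_eq_zero fun i _ => by rw [hsupp i.1 i.2, zero_smul]
    have hfull : ∑ i, y i • Nᵀ i = 0 := by simpa [mulVec_eq_sum] using hNy
    rw [← hfull, ← Fintype.sum_subtype_add_sum_subtype p, hrest, add_zero]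
  funext i
  by_cases hi : p i
  · exact Fintype.linearIndependent_iff.1 hind _ hsum ⟨i, hi⟩
  · exact hsupp i hi

end Matrix

/-- If `H` is symmetric positive definite, `Q` is diagonal with nonnegative
entries, and the columns of `N` indexed by `{i : Qᵢ = 0}` are linearly independent, then
the block matrix `Γ = [[H, N], [Nᵀ, -Q]]` is nonsingular. -/
theorem stmt_3 (n m : ℕ) (H : Matrix (Fin n) (Fin n) ℝ) (hH : H.PosDef)
    (N : Matrix (Fin n) (Fin m) ℝ) (Q : Fin m → ℝ) (hQ : ∀ i, 0 ≤ Q i)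
    (hind : LinearIndependent ℝ
      (fun i : {i : Fin m // Q i = 0} => (fun r => N r i.1 : Fin n → ℝ))) :
    IsUnit (Matrix.fromBlocks H N Nᵀ (-(Matrix.diagonal Q))).det := by
  refine isUnit_iff_ne_zero.2 <|
    det_fromBlocks_ne_zero_of_posDef hH (posSemidef_diagonal_iff.2 hQ) fun y hNy hQy => ?_
  exact eq_zero_of_mulVec_eq_zero_of_linearIndependent hind
    (diagonal_mulVec_eq_zero_iff.1 hQy) hNy
end

section
/- Let (x*, μ*) be a KKT pair for the problem min f₀(x) s.t. f_i(x) ≤ 0 (i ∈ I₁), f_i(x) = 0 (i ∈ I₂), and let c > |μ_i*| for all i ∈ I₂. Define λ_i* = μ_i* for i ∈ I₁ and λ_i* = μ_i* + c for i ∈ I₂. Then (x*, λ*) is a KKT pair for the penalized problem min F_c(x) := f₀(x) - c Σ_{i∈I₂} f_i(x) s.t. f_i(x) ≤ 0 for all i ∈ I₁ ∪ I₂. Conversely, if (x*, λ*) is a KKT pair of the penalized problem with c > |π_i(x*)| for i ∈ I₂, then (x*, μ*) with μ_i = λ_i (i∈I₁), μ_i = λ_i - c (i∈I₂) is a KKT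 pair of the original problem. -/
/-!
The gradient of `F_c` is `∇f₀ - c ∑_{i∈I₂} ∇fᵢ`, so shifting the multipliers on `I₂` by `c`
turns either stationarity condition into the other. Since `|μᵢ| < c`, the shifted multipliers
`λᵢ = μᵢ + c` are positive on `I₂`, and complementary slackness `λᵢ fᵢ(x*) = 0` with `λᵢ > 0`
is exactly the equality constraint `fᵢ(x*) = 0`.
-/

open InnerProductSpace

theorem gradient_sub_const_mul_sum {F ι : Type*} [NormedAddCommGroup F] [InnerProductSpace ℝ F]
    [CompleteSpace F] {g : F → ℝ} {f : ι → F → ℝ} {s : Finset ι} {x : F}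
    (hg : DifferentiableAt ℝ g x) (hf : ∀ i ∈ s, DifferentiableAt ℝ (f i) x) (c : ℝ) :
    gradient (fun y => g y - c * ∑ i ∈ s, f i y) x
      = gradient g x - c • ∑ i ∈ s, gradient (f i) x := by
  have hsum : DifferentiableAt ℝ (fun y => ∑ i ∈ s, f i y) x := DifferentiableAt.fun_sum hf
  simp only [gradient, fderiv_fun_sub hg (hsum.const_mul c), fderiv_const_mul hsum,
    fderiv_fun_sum hf, map_sub, map_smul, map_sum]

theorem sum_union_smul_of_shift {R M ι : Type*} [Ring R] [AddCommGroup M] [Module R M]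
    [DecidableEq ι] {s t : Finset ι} (hst : Disjoint s t) {μ lam : ι → R} {c : R}
    (hs : ∀ i ∈ s, lam i = μ i) (ht : ∀ i ∈ t, lam i = μ i + c) (v : ι → M) :
    ∑ i ∈ s ∪ t, lam i • v i = ∑ i ∈ s ∪ t, μ i • v i + c • ∑ i ∈ t, v i := by
  have hs' : ∑ i ∈ s, lam i • v i = ∑ i ∈ s, μ i • v i :=
    Finset.sum_congr rfl fun i hi => by rw [hs i hi]
  have ht' : ∑ i ∈ t, lam i • v i = ∑ i ∈ t, μ i • v i + c • ∑ i ∈ t, v i := by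
    rw [Finset.smul_sum, ← Finset.sum_add_distrib]
    exact Finset.sum_congr rfl fun i hi => by rw [ht i hi, add_smul]
  rw [Finset.sum_union hst, Finset.sum_union hst, hs', ht', add_assoc]

theorem complementary_slackness_iff_eq_zero {a l : ℝ} (hl : 0 < l) :
    (a ≤ 0 ∧ 0 ≤ l ∧ l * a = 0) ↔ a = 0 :=
  ⟨fun h => (mul_eq_zero.mp h.2.2).resolve_left hl.ne', fun h => by simp [h, hl.le]⟩

theorem stmt_10_general (n m : ℕ) (I₁ I₂ : Finset (Fin m)) (hdisj : Disjoint I₁ I₂)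
    (f₀ : EuclideanSpace ℝ (Fin n) → ℝ) (f : Fin m → EuclideanSpace ℝ (Fin n) → ℝ)
    (hf₀ : ContDiff ℝ 1 f₀) (hf : ∀ i, ContDiff ℝ 1 (f i))
    (c : ℝ) (xstar : EuclideanSpace ℝ (Fin n))
    (μ lam : Fin m → ℝ)
    (hrel : (∀ i ∈ I₁, lam i = μ i) ∧ (∀ i ∈ I₂, lam i = μ i + c))
    (hclarge : ∀ i ∈ I₂, |μ i| < c) :
    -- KKT pair of the original problem
    ((gradient f₀ xstar + ∑ i ∈ I₁ ∪ I₂, μ i • gradient (f i) xstar = 0 ∧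
      (∀ i ∈ I₁, f i xstar ≤ 0 ∧ 0 ≤ μ i ∧ μ i * f i xstar = 0) ∧
      (∀ i ∈ I₂, f i xstar = 0))
    ↔
    -- KKT pair of the penalized problem min F_c s.t. f_i ≤ 0 (i ∈ I₁ ∪ I₂)
    (gradient (fun x => f₀ x - c * ∑ i ∈ I₂, f i x) xstar +
        ∑ i ∈ I₁ ∪ I₂, lam i • gradient (f i) xstar = 0 ∧
      (∀ i ∈ I₁ ∪ I₂, f i xstar ≤ 0 ∧ 0 ≤ lam i ∧ lam i * f i xstar = 0))) := by
  obtain ⟨hrel₁, hrel₂⟩ := hrel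
  have hstat : gradient (fun x => f₀ x - c * ∑ i ∈ I₂, f i x) xstar
        + ∑ i ∈ I₁ ∪ I₂, lam i • gradient (f i) xstar
      = gradient f₀ xstar + ∑ i ∈ I₁ ∪ I₂, μ i • gradient (f i) xstar := by
    rw [gradient_sub_const_mul_sum (hf₀.differentiable one_ne_zero xstar)
      (fun i _ => (hf i).differentiable one_ne_zero xstar), sum_union_smul_of_shift hdisj hrel₁ hrel₂]
    abel
  have hlam_pos : ∀ i ∈ I₂, 0 < lam i := fun i hi => by
    rw [hrel₂ i hi]
    linarith [neg_abs_le (μ i), hclarge i hi]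
  have hI₁ : (∀ i ∈ I₁, f i xstar ≤ 0 ∧ 0 ≤ lam i ∧ lam i * f i xstar = 0)
      ↔ ∀ i ∈ I₁, f i xstar ≤ 0 ∧ 0 ≤ μ i ∧ μ i * f i xstar = 0 :=
    forall₂_congr fun i hi => by rw [hrel₁ i hi]
  have hI₂ : (∀ i ∈ I₂, f i xstar ≤ 0 ∧ 0 ≤ lam i ∧ lam i * f i xstar = 0)
      ↔ ∀ i ∈ I₂, f i xstar = 0 :=
    forall₂_congr fun i hi => complementary_slackness_iff_eq_zero (hlam_pos i hi)
  rw [hstat, Finset.forall_mem_union, hI₁, hI₂]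

/-- exact-penalty KKT equivalence, Lemma 2.3: with
`F_c(x) = f₀(x) - c ∑_{i∈I₂} f_i(x)` and multipliers related by `λᵢ = μᵢ (i∈I₁)`,
`λᵢ = μᵢ + c (i∈I₂)`, and `c > |μᵢ|` for `i ∈ I₂`, the pair `(x*, μ)` is a KKT pair of
the original (equality/inequality constrained) problem if and only if `(x*, λ)` is a KKT
pair of the penalized inequality-constrained problem. -/
theorem stmt_10 (n m : ℕ) (I₁ I₂ : Finset (Fin m)) (hdisj : Disjoint I₁ I₂)
    (f₀ : EuclideanSpace ℝ (Fin n) → ℝ) (f : Fin m → EuclideanSpace ℝ (Fin n) → ℝ)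
    (hf₀ : ContDiff ℝ 1 f₀) (hf : ∀ i, ContDiff ℝ 1 (f i))
    (c : ℝ) (hc : 0 < c) (xstar : EuclideanSpace ℝ (Fin n))
    (μ lam : Fin m → ℝ)
    (hrel : (∀ i ∈ I₁, lam i = μ i) ∧ (∀ i ∈ I₂, lam i = μ i + c))
    (hclarge : ∀ i ∈ I₂, |μ i| < c) :
    -- KKT pair of the original problem
    ((gradient f₀ xstar + ∑ i ∈ I₁ ∪ I₂, μ i • gradient (f i) xstar = 0 ∧
      (∀ i ∈ I₁, f i xstar ≤ 0 ∧ 0 ≤ μ i ∧ μ i * f i xstar = 0) ∧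
      (∀ i ∈ I₂, f i xstar = 0))
    ↔
    -- KKT pair of the penalized problem min F_c s.t. f_i ≤ 0 (i ∈ I₁ ∪ I₂)
    (gradient (fun x => f₀ x - c * ∑ i ∈ I₂, f i x) xstar +
        ∑ i ∈ I₁ ∪ I₂, lam i • gradient (f i) xstar = 0 ∧
      (∀ i ∈ I₁ ∪ I₂, f i xstar ≤ 0 ∧ 0 ≤ lam i ∧ lam i * f i xstar = 0))) :=
  stmt_10_general n m I₁ I₂ hdisj f₀ f hf₀ hf c xstar μ lam hrel hclarge
end
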